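/- arXiv:0806.2276 — 7 statements merged into one kernel-verified Lean document; each statement's English description precedes it below -/
import Mathlib

section
/- A linear fractional map φ(z) = (az+b)/(cz+d) with ad-bc ≠ 0 maps the open unit disk into itself if and only if |b·conj(d) - a·conj(c)| + |ad - bc| ≤ |d|² - |c|². -/
open Complex

/-!
Write `g = b d̄ - a c̄`, `e = ad - bc` and `D = |d|² - |c|²`. Two polynomial identities drive
everything: `D (az + b) = g (cz + d) + e (d̄z + c̄)` and `|cz + d|² = |d̄z + c̄|² + D (1 - |z|²)`.
When `D > 0` the second one makes `z ↦ (d̄z + c̄)/(cz + d)` map the unit disk onto itself, so by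
the first one `D φ` maps the disk onto the disk of centre `g` and radius `|e|`, which lies in the
disk of radius `D` exactly when `|g| + |e| ≤ D`.

Conversely, if `φ(𝔻) ⊆ 𝔻` then by continuity `|az + b| ≤ |cz + d|` on the closed disk, so `cz + d`
cannot vanish there (its zero would also be a zero of `az + b`, forcing `e = 0`); this rules out
`|c| ≥ |d|`, i.e. gives `D > 0`.
-/

open ComplexConjugate Metric

lemma norm_add_norm_le_of_forall_norm_add_mul_le {g e : ℂ} {r : ℝ}
    (h : ∀ u : ℂ, ‖u‖ ≤ 1 → ‖g + e * u‖ ≤ r) : ‖g‖ + ‖e‖ ≤ r := by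
  set ζ := exp ((arg g - arg e : ℝ) * I)
  have hζ : ‖ζ‖ = 1 := norm_exp_ofReal_mul_I _
  have hrot : g + e * ζ = ((‖g‖ + ‖e‖ : ℝ) : ℂ) * exp (arg g * I) := by
    have harg : (arg e : ℂ) * I + (arg g - arg e : ℝ) * I = arg g * I := by push_cast; ring
    conv_lhs => rw [← norm_mul_exp_arg_mul_I g, ← norm_mul_exp_arg_mul_I e]
    rw [mul_assoc, ← exp_add, harg]
    push_cast; ring
  calc ‖g‖ + ‖e‖ = ‖g + e * ζ‖ := by
        rw [hrot, norm_mul, norm_exp_ofReal_mul_I, mul_one, norm_real,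
          Real.norm_of_nonneg (by positivity)]
    _ ≤ r := h ζ hζ.le

lemma norm_mul_add_sq (c d z : ℂ) :
    ‖c * z + d‖ ^ 2 = ‖conj d * z + conj c‖ ^ 2 + (‖d‖ ^ 2 - ‖c‖ ^ 2) * (1 - ‖z‖ ^ 2) := by
  apply ofReal_injective
  push_cast
  simp only [← mul_conj', map_add, map_mul, conj_conj]
  ring

lemma mul_add_mul_norm_sq_sub (a b c d z : ℂ) :
    (a * z + b) * ((‖d‖ ^ 2 - ‖c‖ ^ 2 : ℝ) : ℂ) =
      (b * conj d - a * conj c) * (c * z + d) + (a * d - b * c) * (conj d * z + conj c) := by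
  push_cast
  simp only [← mul_conj']
  ring

lemma mul_add_ne_zero_of_norm_lt {c d z : ℂ} (hcd : ‖c‖ < ‖d‖) (hz : ‖z‖ ≤ 1) :
    c * z + d ≠ 0 := by
  intro h0
  have : ‖d‖ ≤ ‖c‖ := by
    rw [eq_neg_of_add_eq_zero_right h0, norm_neg, norm_mul]
    exact mul_le_of_le_one_right (norm_nonneg c) hz
  linarith

/-- Surjectivity of `z ↦ (d̄z + c̄)/(cz + d)` onto the closed unit disk. -/
lemma exists_conj_mul_add_eq_mul {c d u : ℂ} (hcd : ‖c‖ < ‖d‖) (hu : ‖u‖ ≤ 1) :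
    ∃ z : ℂ, ‖z‖ ≤ 1 ∧ conj d * z + conj c = u * (c * z + d) := by
  have hcd' : ‖-c‖ < ‖conj d‖ := by rwa [norm_neg, norm_conj]
  have hden : conj d - c * u ≠ 0 := by
    rw [sub_eq_neg_add, ← neg_mul]
    exact mul_add_ne_zero_of_norm_lt hcd' hu
  refine ⟨(d * u - conj c) / (conj d - c * u), ?_, ?_⟩
  · have hsq := norm_mul_add_sq (-c) (conj d) u
    rw [conj_conj, map_neg, ← sub_eq_add_neg, norm_neg, norm_conj, neg_mul,
      ← sub_eq_neg_add] at hsq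
    have hle : ‖d * u - conj c‖ ^ 2 ≤ ‖conj d - c * u‖ ^ 2 := by
      have : 0 ≤ (‖d‖ ^ 2 - ‖c‖ ^ 2) * (1 - ‖u‖ ^ 2) := by
        apply mul_nonneg <;> nlinarith [norm_nonneg c, norm_nonneg u]
      linarith
    rw [norm_div, div_le_one (norm_pos_iff.mpr hden)]
    exact (sq_le_sq₀ (norm_nonneg _) (norm_nonneg _)).mp hle
  · rw [div_eq_mul_inv]
    linear_combination (d * u - conj c) * mul_inv_cancel₀ hden

lemma norm_mul_add_le_of_forall_norm_div_lt_one {a b c d : ℂ} (hcd : c ≠ 0 ∨ d ≠ 0)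
    (H : ∀ z : ℂ, ‖z‖ < 1 → ‖(a * z + b) / (c * z + d)‖ < 1) {z : ℂ} (hz : ‖z‖ ≤ 1) :
    ‖a * z + b‖ ≤ ‖c * z + d‖ := by
  set S := {z : ℂ | ‖a * z + b‖ ≤ ‖c * z + d‖}
  have hpole : ∀ w : ℂ, c * w + d = 0 → w = -d / c := by
    intro w hw
    rcases eq_or_ne c 0 with hc | hc
    · simp_all
    · field_simp; linear_combination hw
  have hsub : ball 0 1 ∩ {-d / c}ᶜ ⊆ S := by
    rintro w ⟨hw, hwp⟩
    have hden : c * w + d ≠ 0 := fun h0 => hwp (hpole w h0)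
    have := H w (mem_ball_zero_iff.mp hw)
    rw [norm_div, div_lt_one (norm_pos_iff.mpr hden)] at this
    exact this.le
  have hclosed : closedBall 0 1 ⊆ S := by
    rw [← closure_ball 0 one_ne_zero]
    calc closure (ball 0 1) ⊆ closure (ball 0 1 ∩ {-d / c}ᶜ) :=
          closure_minimal ((dense_compl_singleton _).open_subset_closure_inter isOpen_ball)
            isClosed_closure
      _ ⊆ S := closure_minimal hsub (isClosed_le (by fun_prop) (by fun_prop))
  exact hclosed (mem_closedBall_zero_iff.mpr hz)

lemma norm_lt_norm_of_forall_norm_mul_add_le {a b c d : ℂ} (h : a * d - b * c ≠ 0)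
    (W : ∀ z : ℂ, ‖z‖ ≤ 1 → ‖a * z + b‖ ≤ ‖c * z + d‖) : ‖c‖ < ‖d‖ := by
  by_contra! hdc
  have hc : c ≠ 0 := by
    rintro rfl
    exact h (by simp [norm_le_zero_iff.mp (by simpa using hdc)])
  have hpole : c * (-d / c) + d = 0 := by field_simp; ring
  have hzero : a * (-d / c) + b = 0 := by
    have hp : ‖-d / c‖ ≤ 1 := by
      rw [norm_div, norm_neg]
      exact div_le_one_of_le₀ hdc (norm_nonneg c)
    simpa [hpole] using W (-d / c) hp
  exact h (by field_simp at hzero; linear_combination -hzero)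

lemma lft_criterion_of_forall_norm_div_lt_one {a b c d : ℂ} (h : a * d - b * c ≠ 0)
    (H : ∀ z : ℂ, ‖z‖ < 1 → ‖(a * z + b) / (c * z + d)‖ < 1) :
    ‖b * conj d - a * conj c‖ + ‖a * d - b * c‖ ≤ ‖d‖ ^ 2 - ‖c‖ ^ 2 := by
  have hcd0 : c ≠ 0 ∨ d ≠ 0 := by
    by_contra! h0
    exact h (by simp [h0])
  have W := fun z (hz : ‖z‖ ≤ 1) => norm_mul_add_le_of_forall_norm_div_lt_one hcd0 H hz
  have hcd := norm_lt_norm_of_forall_norm_mul_add_le h W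
  have hD : 0 ≤ ‖d‖ ^ 2 - ‖c‖ ^ 2 := by nlinarith [norm_nonneg c]
  apply norm_add_norm_le_of_forall_norm_add_mul_le
  intro u hu
  obtain ⟨z, hz, hzu⟩ := exists_conj_mul_add_eq_mul hcd hu
  have hden := mul_add_ne_zero_of_norm_lt hcd hz
  have hdecomp := mul_add_mul_norm_sq_sub a b c d z
  rw [hzu, ← mul_assoc, ← add_mul] at hdecomp
  have : ‖b * conj d - a * conj c + (a * d - b * c) * u‖ * ‖c * z + d‖ ≤
      (‖d‖ ^ 2 - ‖c‖ ^ 2) * ‖c * z + d‖ := by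
    rw [← norm_mul, ← hdecomp, norm_mul, norm_real, Real.norm_of_nonneg hD, mul_comm]
    exact mul_le_mul_of_nonneg_left (W z hz) hD
  exact le_of_mul_le_mul_right this (norm_pos_iff.mpr hden)

lemma norm_div_lt_one_of_lft_criterion {a b c d : ℂ} (h : a * d - b * c ≠ 0)
    (hcrit : ‖b * conj d - a * conj c‖ + ‖a * d - b * c‖ ≤ ‖d‖ ^ 2 - ‖c‖ ^ 2) {z : ℂ}
    (hz : ‖z‖ < 1) : ‖(a * z + b) / (c * z + d)‖ < 1 := by
  set D := ‖d‖ ^ 2 - ‖c‖ ^ 2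
  have he : 0 < ‖a * d - b * c‖ := norm_pos_iff.mpr h
  have hD : 0 < D := by linarith [norm_nonneg (b * conj d - a * conj c)]
  have hlt : ‖conj d * z + conj c‖ < ‖c * z + d‖ := by
    have hz2 : 0 < 1 - ‖z‖ ^ 2 := by nlinarith [norm_nonneg z]
    have := norm_mul_add_sq c d z
    exact (sq_lt_sq₀ (norm_nonneg _) (norm_nonneg _)).mp (by nlinarith)
  have hpos : 0 < ‖c * z + d‖ := (norm_nonneg _).trans_lt hlt
  have hmain : ‖a * z + b‖ * D < ‖c * z + d‖ * D :=
    calc ‖a * z + b‖ * D = ‖(a * z + b) * (D : ℂ)‖ := by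
          rw [norm_mul, norm_real, Real.norm_of_nonneg hD.le]
      _ ≤ ‖b * conj d - a * conj c‖ * ‖c * z + d‖ +
            ‖a * d - b * c‖ * ‖conj d * z + conj c‖ := by
          rw [mul_add_mul_norm_sq_sub, ← norm_mul, ← norm_mul]
          exact norm_add_le _ _
      _ < (‖b * conj d - a * conj c‖ + ‖a * d - b * c‖) * ‖c * z + d‖ := by
          nlinarith [mul_lt_mul_of_pos_left hlt he]
      _ ≤ ‖c * z + d‖ * D := (mul_le_mul_of_nonneg_right hcrit hpos.le).trans_eq (mul_comm _ _)
  rw [norm_div, div_lt_one hpos]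
  exact lt_of_mul_lt_mul_right hmain hD.le

theorem lft_self_map_criterion (a b c d : ℂ) (h : a * d - b * c ≠ 0) :
    (∀ z : ℂ, ‖z‖ < 1 → ‖(a * z + b) / (c * z + d)‖ < 1) ↔
      ‖b * (starRingEnd ℂ) d - a * (starRingEnd ℂ) c‖ +
        ‖a * d - b * c‖ ≤ ‖d‖ ^ 2 - ‖c‖ ^ 2 :=
  ⟨lft_criterion_of_forall_norm_div_lt_one h,
    fun hcrit _ hz => norm_div_lt_one_of_lft_criterion h hcrit hz⟩
end

section
/- The map φ(z) = Az/(Cz+1), where A and C are complex numbers, maps the open unit disk into itself if and only if |A| + |C| ≤ 1. -/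
/-!
If `‖A‖ + ‖C‖ ≤ 1` and `‖z‖ < 1`, then `‖A z‖ = ‖A‖ ‖z‖ < 1 - ‖C‖ ‖z‖ ≤ ‖C z + 1‖`.
Conversely, the pole `-C⁻¹` must lie outside the disk, so `‖C‖ ≤ 1`; then at the point
`z = -r e^{-i arg C}` of radius `r < 1` the denominator is `1 - r ‖C‖ > 0`, and the self-map
condition reads `r (‖A‖ + ‖C‖) < 1`. Taking `r = (‖A‖ + ‖C‖)⁻¹` rules out `‖A‖ + ‖C‖ > 1`.
-/

open Complex

section NormedDivisionRing

variable {𝕜 : Type*} [NormedDivisionRing 𝕜] {A C z : 𝕜}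

theorem norm_mul_lt_norm_mul_add_one (h : ‖A‖ + ‖C‖ ≤ 1) (hz : ‖z‖ < 1) :
    ‖A * z‖ < ‖C * z + 1‖ := by
  have hsum : (‖A‖ + ‖C‖) * ‖z‖ < 1 :=
    (mul_le_of_le_one_left (norm_nonneg z) h).trans_lt hz
  calc ‖A * z‖ = ‖A‖ * ‖z‖ := norm_mul A z
    _ < ‖(1 : 𝕜)‖ - ‖C * z‖ := by rw [norm_one, norm_mul]; linarith
    _ ≤ ‖C * z + 1‖ := by simpa [add_comm] using norm_sub_norm_le (1 : 𝕜) (-(C * z))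

theorem norm_le_one_of_forall_mul_add_one_ne_zero (h : ∀ z : 𝕜, ‖z‖ < 1 → C * z + 1 ≠ 0) :
    ‖C‖ ≤ 1 := by
  by_contra! hC
  have hC0 : C ≠ 0 := norm_pos_iff.mp (one_pos.trans hC)
  refine h (-C⁻¹) ?_ ?_
  · rw [norm_neg, norm_inv]
    exact inv_lt_one_of_one_lt₀ hC
  · rw [mul_neg, mul_inv_cancel₀ hC0, neg_add_cancel]

end NormedDivisionRing

theorem Complex.exists_norm_eq_and_mul_eq_neg (C : ℂ) {r : ℝ} (hr : 0 ≤ r) :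
    ∃ z : ℂ, ‖z‖ = r ∧ C * z = -(r * ‖C‖ : ℝ) := by
  refine ⟨-(r * exp (-(arg C * I))), ?_, ?_⟩
  · rw [norm_neg, norm_mul, norm_real, Real.norm_of_nonneg hr, ← neg_mul, ← ofReal_neg,
      norm_exp_ofReal_mul_I, mul_one]
  · calc C * -(r * exp (-(arg C * I)))
        = -(r * ‖C‖ : ℝ) * (exp (arg C * I) * exp (-(arg C * I))) := by
          push_cast
          linear_combination (r * exp (-(arg C * I))) * norm_mul_exp_arg_mul_I C
      _ = -(r * ‖C‖ : ℝ) := by rw [← exp_add, add_neg_cancel, exp_zero, mul_one]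

theorem mul_norm_add_norm_lt_one_of_norm_div_lt_one {A C : ℂ}
    (h : ∀ z : ℂ, ‖z‖ < 1 → C * z + 1 ≠ 0 ∧ ‖A * z / (C * z + 1)‖ < 1)
    {r : ℝ} (hr0 : 0 ≤ r) (hr1 : r < 1) : r * (‖A‖ + ‖C‖) < 1 := by
  have hC : ‖C‖ ≤ 1 := norm_le_one_of_forall_mul_add_one_ne_zero fun z hz ↦ (h z hz).1
  have hden : 0 < 1 - r * ‖C‖ := by linarith [mul_le_of_le_one_right hr0 hC]
  obtain ⟨z, hzr, hCz⟩ := C.exists_norm_eq_and_mul_eq_neg hr0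
  have hz : C * z + 1 = ((1 - r * ‖C‖ : ℝ) : ℂ) := by rw [hCz]; push_cast; ring
  have hmap := (h z (hzr ▸ hr1)).2
  rw [hz, norm_div, norm_mul, hzr, norm_real, Real.norm_of_nonneg hden.le,
    div_lt_one hden] at hmap
  linarith

theorem lft_self_map_special (A C : ℂ) :
    (∀ z : ℂ, ‖z‖ < 1 →
        C * z + 1 ≠ 0 ∧ ‖A * z / (C * z + 1)‖ < 1) ↔
      ‖A‖ + ‖C‖ ≤ 1 := by
  constructor
  · intro h
    by_contra! hgt
    have hpos : 0 < ‖A‖ + ‖C‖ := one_pos.trans hgt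
    have hlt := mul_norm_add_norm_lt_one_of_norm_div_lt_one h (inv_nonneg.mpr hpos.le)
      (inv_lt_one_of_one_lt₀ hgt)
    rw [inv_mul_cancel₀ hpos.ne'] at hlt
    exact hlt.false
  · intro h z hz
    have hlt := norm_mul_lt_norm_mul_add_one h hz
    have hden : 0 < ‖C * z + 1‖ := (norm_nonneg _).trans_lt hlt
    exact ⟨norm_pos_iff.mp hden, by rwa [norm_div, div_lt_one hden]⟩
end

section
/- Let λ, μ ∈ ℂ with |λ| = |μ| = 1, and suppose λⁿ ≠ 1 for every positive integer n. Let h : 𝔻 → ℂ be holomorphic, h ≢ 0, with h(0) = 0 and h(λz) = μh(z) for all z ∈ 𝔻. Then there exist a positive integer n₀ and a nonzero complex number β such that h(z) = βz^{n₀} for all z ∈ 𝔻. -/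
/-!
Comparing Taylor coefficients at `0` in `h (λ z) = μ h z` gives `λⁿ aₙ = μ aₙ` for every `n`.
As `λ ≠ 0` is not a root of unity, `n ↦ λⁿ` is injective, so at most one coefficient `a_{n₀}`
is nonzero; it exists because `h ≢ 0`, and `n₀ > 0` because `h 0 = 0`. Since the Taylor series
of `h` at `0` converges to `h` on the whole disc, `h z = a_{n₀} z ^ n₀` there.
-/

open Complex

theorem pow_injective_of_forall_pow_ne_one {M : Type*} [MonoidWithZero M] [IsLeftCancelMulZero M]
    [NoZeroDivisors M] {x : M} (hx : x ≠ 0) (hroot : ∀ n : ℕ, 0 < n → x ^ n ≠ 1) :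
    Function.Injective (x ^ · : ℕ → M) := by
  intro m n hmn
  wlog hle : m ≤ n generalizing m n
  · exact (this hmn.symm (le_of_not_ge hle)).symm
  obtain ⟨k, rfl⟩ := Nat.exists_eq_add_of_le hle
  have hk : x ^ k = 1 :=
    mul_left_cancel₀ (pow_ne_zero m hx) (by simpa only [pow_add, mul_one] using hmn.symm)
  by_contra hne
  exact hroot k (by omega) hk

theorem iteratedDeriv_comp_const_mul_of_isOpen {𝕜 F : Type*} [NontriviallyNormedField 𝕜]
    [NormedAddCommGroup F] [NormedSpace 𝕜 F] {n : ℕ} {f : 𝕜 → F} {s : Set 𝕜} {c x : 𝕜}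
    (hs : IsOpen s) (hf : ContDiffOn 𝕜 n f s) (hc : Set.MapsTo (c * ·) s s) (hx : x ∈ s) :
    iteratedDeriv n (fun y => f (c * y)) x = c ^ n • iteratedDeriv n f (c * x) := by
  rw [← iteratedDerivWithin_of_isOpen hs hx, ← iteratedDerivWithin_of_isOpen hs (hc hx)]
  exact iteratedDerivWithin_comp_const_smul hx hs.uniqueDiffOn hf c hc

theorem eq_taylor_term_of_iteratedDeriv_eq_zero_of_ne {E : Type*} [NormedAddCommGroup E]
    [NormedSpace ℂ E] [CompleteSpace E] {f : ℂ → E} {c : ℂ} {r : ℝ}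
    (hf : DifferentiableOn ℂ f (Metric.ball c r)) {n₀ : ℕ}
    (hvanish : ∀ n ≠ n₀, iteratedDeriv n f c = 0) {z : ℂ} (hz : z ∈ Metric.ball c r) :
    f z = (n₀.factorial : ℂ)⁻¹ • (z - c) ^ n₀ • iteratedDeriv n₀ f c :=
  (hasSum_taylorSeries_on_ball hf hz).unique <|
    hasSum_single n₀ fun n hn => by rw [hvanish n hn, smul_zero, smul_zero]

theorem pow_mul_iteratedDeriv_eq_of_eqOn_ball {f : ℂ → ℂ} {lam mu : ℂ} (hlam : ‖lam‖ ≤ 1)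
    (hf : DifferentiableOn ℂ f (Metric.ball 0 1))
    (heq : Set.EqOn (fun z => f (lam * z)) (fun z => mu * f z) (Metric.ball 0 1)) (n : ℕ) :
    lam ^ n * iteratedDeriv n f 0 = mu * iteratedDeriv n f 0 := by
  have hmaps : Set.MapsTo (lam * ·) (Metric.ball (0 : ℂ) 1) (Metric.ball 0 1) := fun z hz => by
    rw [mem_ball_zero_iff] at hz ⊢
    exact (norm_mul_le lam z).trans_lt ((mul_le_of_le_one_left (norm_nonneg z) hlam).trans_lt hz)
  have hmem : (0 : ℂ) ∈ Metric.ball 0 1 := Metric.mem_ball_self one_pos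
  have := heq.iteratedDeriv_of_isOpen Metric.isOpen_ball n hmem
  rwa [iteratedDeriv_comp_const_mul_of_isOpen Metric.isOpen_ball
    (hf.contDiffOn Metric.isOpen_ball) hmaps hmem, iteratedDeriv_const_mul_field, mul_zero,
    smul_eq_mul] at this

theorem monomial_form_general (lam mu : ℂ)
    (hlam : ‖lam‖ = 1)
    (hroot : ∀ n : ℕ, 0 < n → lam ^ n ≠ 1)
    (h : ℂ → ℂ) (hdiff : DifferentiableOn ℂ h {z : ℂ | ‖z‖ < 1})
    (h0 : h 0 = 0)
    (heq : ∀ z : ℂ, ‖z‖ < 1 → h (lam * z) = mu * h z)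
    (hnz : ¬ ∀ z : ℂ, ‖z‖ < 1 → h z = 0) :
    ∃ (n₀ : ℕ) (β : ℂ), 0 < n₀ ∧ β ≠ 0 ∧
      ∀ z : ℂ, ‖z‖ < 1 → h z = β * z ^ n₀ := by
  rw [← ball_zero_eq] at hdiff
  have hcoeff := pow_mul_iteratedDeriv_eq_of_eqOn_ball hlam.le hdiff
    fun z hz => heq z (mem_ball_zero_iff.mp hz)
  obtain ⟨n₀, hn₀⟩ : ∃ n, iteratedDeriv n h 0 ≠ 0 := by
    by_contra! hall
    refine hnz fun z hz => ?_
    simpa [hall, h0] using eq_taylor_term_of_iteratedDeriv_eq_zero_of_ne hdiff (n₀ := 0)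
      (fun n _ => hall n) (mem_ball_zero_iff.mpr hz)
  have hinj := pow_injective_of_forall_pow_ne_one (by rintro rfl; simp at hlam) hroot
  have hvanish : ∀ n ≠ n₀, iteratedDeriv n h 0 = 0 := fun n hn => by
    by_contra hne
    exact hn <| hinj <|
      (mul_right_cancel₀ hne (hcoeff n)).trans (mul_right_cancel₀ hn₀ (hcoeff n₀)).symm
  refine ⟨n₀, (n₀.factorial : ℂ)⁻¹ * iteratedDeriv n₀ h 0, ?_,
    by simpa [Nat.factorial_ne_zero] using hn₀, fun z hz => ?_⟩
  · exact Nat.pos_of_ne_zero fun hzero => hn₀ (by simpa [hzero] using h0)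
  · rw [eq_taylor_term_of_iteratedDeriv_eq_zero_of_ne hdiff hvanish (mem_ball_zero_iff.mpr hz)]
    simp only [sub_zero, smul_eq_mul]
    ring

theorem monomial_form (lam mu : ℂ)
    (hlam : ‖lam‖ = 1) (hmu : ‖mu‖ = 1)
    (hroot : ∀ n : ℕ, 0 < n → lam ^ n ≠ 1)
    (h : ℂ → ℂ) (hdiff : DifferentiableOn ℂ h {z : ℂ | ‖z‖ < 1})
    (h0 : h 0 = 0)
    (heq : ∀ z : ℂ, ‖z‖ < 1 → h (lam * z) = mu * h z)
    (hnz : ¬ ∀ z : ℂ, ‖z‖ < 1 → h z = 0) :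
    ∃ (n₀ : ℕ) (β : ℂ), 0 < n₀ ∧ β ≠ 0 ∧
      ∀ z : ℂ, ‖z‖ < 1 → h z = β * z ^ n₀ :=
  monomial_form_general lam mu hlam hroot h hdiff h0 heq hnz
end

section
/- Let H : ℍ → ℍ be holomorphic, α > 1 a real number, b a real number, and A a complex number such that H(αw + ib) = αH(w) + A for all w ∈ ℍ. If the angular limit c = ∠lim_{w→∞} H(w)/w exists in [0,∞), then H(w) = cw + (cb/(α-1))i - A/(α-1) for all w ∈ ℍ, and consequently Re A ≤ 0. -/
/-!
The affine map `T w = α w + i b` has the fixed point `d = i b / (1 - α)` on the imaginary axis, and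
`Tⁿ w = αⁿ (w - d) + d`; the functional equation gives likewise
`H (Tⁿ w) = αⁿ (H w - A / (1 - α)) + A / (1 - α)`. Hence `H (Tⁿ w) / Tⁿ w → (H w - A / (1 - α)) / (w - d)`,
while `Tⁿ w → ∞` inside a Stolz angle, so this quotient is the angular limit `c`. Solving for `H w`
gives the affine formula, and an affine self-map of the right half-plane has a constant term
with nonnegative real part.
-/

open Complex Filter Function Set Topology

theorem apply_iterate_of_semiconj_on {X Y : Type*} {f : X → Y} {g : X → X} {g' : Y → Y}
    {s : Set X} (hs : MapsTo g s s) (h : ∀ x ∈ s, f (g x) = g' (f x)) (n : ℕ) :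
    ∀ x ∈ s, f (g^[n] x) = g'^[n] (f x) := by
  induction n with
  | zero => simp
  | succ n ih =>
    intro x hx
    rw [iterate_succ_apply, iterate_succ_apply, ih (g x) (hs hx), h x hx]

theorem affine_iterate {K : Type*} [Field K] {a : K} (ha : a ≠ 1) (β : K) (n : ℕ) (w : K) :
    (fun z => a * z + β)^[n] w = a ^ n * (w - β / (1 - a)) + β / (1 - a) := by
  have : 1 - a ≠ 0 := sub_ne_zero.mpr ha.symm
  induction n with
  | zero => simp
  | succ n ih =>
    rw [iterate_succ_apply', ih]
    field_simp
    ring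

theorem tendsto_pow_mul_add_div_pow_mul_add {𝕜 : Type*} [NormedField 𝕜] {a : 𝕜}
    (ha : 1 < ‖a‖) (p r : 𝕜) {q : 𝕜} (hq : q ≠ 0) (s : 𝕜) :
    Tendsto (fun n : ℕ => (a ^ n * p + r) / (a ^ n * q + s)) atTop (𝓝 (p / q)) := by
  have ha0 : a ≠ 0 := norm_pos_iff.mp (by linarith)
  have hinv : Tendsto (fun n : ℕ => a⁻¹ ^ n) atTop (𝓝 0) :=
    tendsto_pow_atTop_nhds_zero_of_norm_lt_one (by rw [norm_inv]; exact inv_lt_one_of_one_lt₀ ha)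
  have hlim := (tendsto_const_nhds (x := p)).add (hinv.const_mul r) |>.div
    ((tendsto_const_nhds (x := q)).add (hinv.const_mul s)) (by simpa using hq)
  simp only [mul_zero, add_zero] at hlim
  refine hlim.congr fun n => ?_
  simp only [Pi.div_apply, inv_pow]
  field_simp

theorem abs_im_le_mul_re_ofReal_mul_add {t : ℝ} {z d : ℂ} (ht : 1 ≤ t) (hz : 0 < z.re)
    (hd : 0 ≤ d.re) :
    |((t : ℂ) * z + d).im| ≤ (|z.im| + |d.im|) / z.re * ((t : ℂ) * z + d).re := by
  simp only [add_im, add_re, im_ofReal_mul, re_ofReal_mul]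
  calc |t * z.im + d.im| ≤ t * |z.im| + |d.im| := by
        grw [abs_add_le, abs_mul, abs_of_nonneg (by linarith : (0:ℝ) ≤ t)]
    _ ≤ (|z.im| + |d.im|) / z.re * (t * z.re) := by
        rw [div_mul_comm, mul_div_cancel_right₀ _ hz.ne']
        nlinarith [abs_nonneg d.im]
    _ ≤ _ := mul_le_mul_of_nonneg_left (by linarith) (by positivity)

theorem tendsto_norm_ofReal_mul_add {ι : Type*} {l : Filter ι} {t : ι → ℝ}
    (ht : Tendsto t l atTop) {z : ℂ} (hz : z ≠ 0) (d : ℂ) :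
    Tendsto (fun i => ‖(t i : ℂ) * z + d‖) l atTop := by
  refine tendsto_atTop_mono (fun i => ?_)
    (tendsto_atTop_add_const_right _ (-‖d‖) (ht.atTop_mul_const (norm_pos_iff.mpr hz)))
  calc t i * ‖z‖ + -‖d‖ ≤ ‖(t i : ℂ) * z‖ - ‖d‖ := by
        rw [norm_mul, norm_real, ← sub_eq_add_neg]; gcongr; exact Real.le_norm_self _
    _ ≤ _ := norm_sub_le_norm_add _ _

theorem re_nonneg_of_affine_re_pos {c : ℝ} {z : ℂ}
    (h : ∀ w : ℂ, 0 < w.re → 0 < ((c : ℂ) * w + z).re) : 0 ≤ z.re := by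
  have hpos : ∀ ε : ℝ, 0 < ε → 0 < c * ε + z.re := fun ε hε => by
    simpa [← ofReal_mul] using h ε (by simpa using hε)
  have hcont : Tendsto (fun ε : ℝ => c * ε + z.re) (𝓝[>] 0) (𝓝 z.re) := by
    have := ((continuous_const_mul c).add continuous_const).tendsto (0 : ℝ)
      (f := fun ε => c * ε + z.re)
    simpa using this.mono_left nhdsWithin_le_nhds
  exact ge_of_tendsto hcont (eventually_nhdsWithin_of_forall fun ε hε => (hpos ε hε).le)

theorem eq_affine_of_semiconj_of_angular_limit (H : ℂ → ℂ) {α : ℝ} (hα : 1 < α) (b : ℝ) (A : ℂ)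
    (heq : ∀ w : ℂ, 0 < w.re → H ((α : ℂ) * w + (b : ℂ) * I) = (α : ℂ) * H w + A) (c : ℂ)
    (hlim : ∀ u : ℕ → ℂ, (∀ n, 0 < (u n).re) →
      (∃ M : ℝ, ∀ n, |(u n).im| ≤ M * (u n).re) →
      Tendsto (fun n => ‖u n‖) atTop atTop →
      Tendsto (fun n => H (u n) / u n) atTop (𝓝 c))
    {w : ℂ} (hw : 0 < w.re) :
    H w = c * (w - b * I / (1 - α)) + A / (1 - α) := by
  have hα1 : (α : ℂ) ≠ 1 := by exact_mod_cast hα.ne'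
  set d : ℂ := b * I / (1 - α)
  have hd : d = ((b / (1 - α) : ℝ) : ℂ) * I := by push_cast; ring
  have hdre : d.re = 0 := by rw [hd, re_ofReal_mul, I_re, mul_zero]
  have hwd : 0 < (w - d).re := by simpa [hdre] using hw
  have hwd0 : w - d ≠ 0 := ne_of_apply_ne re hwd.ne'
  have hmaps : MapsTo (fun z : ℂ => α * z + b * I) {z | 0 < z.re} {z | 0 < z.re} :=
    fun z hz => by simpa using mul_pos (by linarith) hz
  set u : ℕ → ℂ := fun n => (fun z : ℂ => α * z + b * I)^[n] w
  have hu : ∀ n, u n = ((α ^ n : ℝ) : ℂ) * (w - d) + d := fun n => by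
    simp only [u, affine_iterate hα1]; push_cast; rfl
  have hHu : ∀ n, H (u n) = (α : ℂ) ^ n * (H w - A / (1 - α)) + A / (1 - α) := fun n => by
    rw [apply_iterate_of_semiconj_on (f := H) (g' := fun z => α * z + A) hmaps heq n w hw,
      affine_iterate hα1]
  have hα_pow : ∀ n, 1 ≤ α ^ n := fun n => one_le_pow₀ hα.le
  have hu_re : ∀ n, 0 < (u n).re := fun n => by
    rw [hu, add_re, re_ofReal_mul, hdre, add_zero]
    exact mul_pos (by linarith [hα_pow n]) hwd
  have hu_norm : Tendsto (fun n => ‖u n‖) atTop atTop := by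
    simpa only [hu] using
      tendsto_norm_ofReal_mul_add (tendsto_pow_atTop_atTop_of_one_lt hα) hwd0 d
  have hlim_c := hlim u hu_re
    ⟨_, fun n => hu n ▸ abs_im_le_mul_re_ofReal_mul_add (hα_pow n) hwd hdre.ge⟩ hu_norm
  have hlim_formula :
      Tendsto (fun n => H (u n) / u n) atTop (𝓝 ((H w - A / (1 - α)) / (w - d))) := by
    simp_rw [hHu, hu, ofReal_pow]
    exact tendsto_pow_mul_add_div_pow_mul_add
      (by rwa [norm_real, Real.norm_of_nonneg (by linarith)]) _ _ hwd0 _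
  rw [tendsto_nhds_unique hlim_c hlim_formula, div_mul_cancel₀ _ hwd0]
  ring

theorem affine_functional_equation_rigidity_general (H : ℂ → ℂ)
    (hmaps : ∀ w : ℂ, 0 < w.re → 0 < (H w).re)
    (α : ℝ) (hα : 1 < α) (b : ℝ) (A : ℂ)
    (heq : ∀ w : ℂ, 0 < w.re → H ((α : ℂ) * w + (b : ℂ) * Complex.I)
      = (α : ℂ) * H w + A)
    (c : ℝ)
    (hlim : ∀ u : ℕ → ℂ, (∀ n, 0 < (u n).re) →
      (∃ M : ℝ, ∀ n, |(u n).im| ≤ M * (u n).re) →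
      Tendsto (fun n => ‖u n‖) atTop atTop →
      Tendsto (fun n => H (u n) / u n) atTop (nhds (c : ℂ))) :
    (∀ w : ℂ, 0 < w.re →
        H w = (c : ℂ) * w + ((c : ℂ) * b / ((α : ℂ) - 1)) * Complex.I - A / ((α : ℂ) - 1)) ∧
      A.re ≤ 0 := by
  have hα1 : (α : ℂ) - 1 ≠ 0 := sub_ne_zero.mpr (by exact_mod_cast hα.ne')
  have hH : ∀ w : ℂ, 0 < w.re →
      H w = (c : ℂ) * w + ((c : ℂ) * b / ((α : ℂ) - 1)) * Complex.I - A / ((α : ℂ) - 1) := by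
    intro w hw
    rw [eq_affine_of_semiconj_of_angular_limit H hα b A heq c hlim hw]
    rw [show (1 : ℂ) - α = -(α - 1) by ring]
    field_simp
    ring
  refine ⟨hH, ?_⟩
  have hconst := re_nonneg_of_affine_re_pos (c := c)
    (z := ((c : ℂ) * b / ((α : ℂ) - 1)) * I - A / ((α : ℂ) - 1))
    fun w hw => by simpa only [hH w hw, add_sub_assoc] using hmaps w hw
  have hre : (((c : ℂ) * b / ((α : ℂ) - 1)) * I - A / ((α : ℂ) - 1)).re = -(A.re / (α - 1)) := by
    have hcast : (α : ℂ) - 1 = ((α - 1 : ℝ) : ℂ) := by push_cast; ring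
    rw [hcast, sub_re, div_ofReal_re, mul_I_re, ← ofReal_mul, ← ofReal_div, ofReal_im]
    ring
  rw [hre, neg_nonneg] at hconst
  simpa using (div_le_iff₀ (by linarith : (0 : ℝ) < α - 1)).mp hconst

theorem affine_functional_equation_rigidity (H : ℂ → ℂ)
    (hdiff : DifferentiableOn ℂ H {w : ℂ | 0 < w.re})
    (hmaps : ∀ w : ℂ, 0 < w.re → 0 < (H w).re)
    (α : ℝ) (hα : 1 < α) (b : ℝ) (A : ℂ)
    (heq : ∀ w : ℂ, 0 < w.re → H ((α : ℂ) * w + (b : ℂ) * Complex.I)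
      = (α : ℂ) * H w + A)
    (c : ℝ) (hc : 0 ≤ c)
    (hlim : ∀ u : ℕ → ℂ, (∀ n, 0 < (u n).re) →
      (∃ M : ℝ, ∀ n, |(u n).im| ≤ M * (u n).re) →
      Tendsto (fun n => ‖u n‖) atTop atTop →
      Tendsto (fun n => H (u n) / u n) atTop (nhds (c : ℂ))) :
    (∀ w : ℂ, 0 < w.re →
        H w = (c : ℂ) * w + ((c : ℂ) * b / ((α : ℂ) - 1)) * Complex.I - A / ((α : ℂ) - 1)) ∧
      A.re ≤ 0 :=
  affine_functional_equation_rigidity_general H hmaps α hα b A heq c hlim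
end

section
/- Let g : ℍ → ℍ be holomorphic and suppose g(w + a) = g(w) for all w ∈ ℍ, where a is a complex number with Re a > 0. If the angular limit ∠lim_{w→∞} g(w) exists in the extended plane, then g is constant. -/
/-!
Translating a point `w` of the half-plane by multiples of the period gives a sequence
`w + n • a` that stays in a Stolz angle and tends to `∞`, while `g` is constant equal to `g w`
along it. So the angular limit of `g` at `∞` equals `g w` for every `w` (and cannot be `∞`).
-/

open Complex Filter

section PeriodicOn

variable {α β : Type*} [AddMonoid α] {S : Set α} {a : α}

theorem add_nsmul_mem_of_add_mem (hS : ∀ w ∈ S, w + a ∈ S) {w : α} (hw : w ∈ S) :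
    ∀ n : ℕ, w + n • a ∈ S
  | 0 => by simpa using hw
  | n + 1 => by
    rw [succ_nsmul, ← add_assoc]
    exact hS _ (add_nsmul_mem_of_add_mem hS hw n)

theorem apply_add_nsmul_eq_of_periodicOn {g : α → β} (hS : ∀ w ∈ S, w + a ∈ S)
    (hg : ∀ w ∈ S, g (w + a) = g w) {w : α} (hw : w ∈ S) :
    ∀ n : ℕ, g (w + n • a) = g w
  | 0 => by simp
  | n + 1 => by
    rw [succ_nsmul, ← add_assoc, hg _ (add_nsmul_mem_of_add_mem hS hw n),
      apply_add_nsmul_eq_of_periodicOn hS hg hw n]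

end PeriodicOn

theorem tendsto_norm_add_nsmul_atTop {E : Type*} [NormedAddCommGroup E] [NormedSpace ℝ E]
    {a : E} (ha : a ≠ 0) (w : E) : Tendsto (fun n : ℕ => ‖w + n • a‖) atTop atTop := by
  have h : Tendsto (fun n : ℕ => (n : ℝ) * ‖a‖ - ‖w‖) atTop atTop :=
    tendsto_atTop_add_const_right _ _
      (tendsto_natCast_atTop_atTop.atTop_mul_const (norm_pos_iff.2 ha))
  refine tendsto_atTop_mono (fun n => ?_) h
  calc (n : ℝ) * ‖a‖ - ‖w‖ = ‖n • a‖ - ‖-w‖ := by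
        rw [norm_neg, ← Nat.cast_smul_eq_nsmul ℝ, norm_smul, Real.norm_natCast]
    _ ≤ ‖n • a - -w‖ := norm_sub_norm_le _ _
    _ = ‖w + n • a‖ := by rw [sub_neg_eq_add, add_comm]

namespace Complex

theorem abs_im_le_mul_re_add {z v : ℂ} {M : ℝ} (hz : |z.im| ≤ M * z.re)
    (hv : |v.im| ≤ M * v.re) : |(z + v).im| ≤ M * (z + v).re := by
  rw [add_im, add_re, mul_add]
  exact (abs_add_le _ _).trans (add_le_add hz hv)

theorem abs_im_le_mul_re_nsmul {z : ℂ} {M : ℝ} (hz : |z.im| ≤ M * z.re) (n : ℕ) :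
    |(n • z).im| ≤ M * (n • z).re := by
  rw [smul_im, smul_re, nsmul_eq_mul, nsmul_eq_mul, abs_mul, Nat.abs_cast, mul_left_comm]
  exact mul_le_mul_of_nonneg_left hz n.cast_nonneg

theorem exists_abs_im_le_mul_re_add_nsmul {w a : ℂ} (hw : 0 < w.re) (ha : 0 < a.re) :
    ∃ M : ℝ, ∀ n : ℕ, |(w + n • a).im| ≤ M * (w + n • a).re :=
  ⟨max (|w.im| / w.re) (|a.im| / a.re), fun n =>
    abs_im_le_mul_re_add ((div_le_iff₀ hw).1 (le_max_left _ _))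
      (abs_im_le_mul_re_nsmul ((div_le_iff₀ ha).1 (le_max_right _ _)) n)⟩

end Complex

theorem periodic_with_angular_limit_constant_general (g : ℂ → ℂ)
    (a : ℂ) (ha : 0 < a.re)
    (heq : ∀ w : ℂ, 0 < w.re → g (w + a) = g w)
    (hlim :
      (∃ L : ℂ, ∀ u : ℕ → ℂ, (∀ n, 0 < (u n).re) →
          (∃ M : ℝ, ∀ n, |(u n).im| ≤ M * (u n).re) →
          Tendsto (fun n => ‖u n‖) atTop atTop →
          Tendsto (fun n => g (u n)) atTop (nhds L)) ∨
        (∀ u : ℕ → ℂ, (∀ n, 0 < (u n).re) →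
          (∃ M : ℝ, ∀ n, |(u n).im| ≤ M * (u n).re) →
          Tendsto (fun n => ‖u n‖) atTop atTop →
          Tendsto (fun n => ‖g (u n)‖) atTop atTop)) :
    ∀ w w' : ℂ, 0 < w.re → 0 < w'.re → g w = g w' := by
  have hS : ∀ w : ℂ, 0 < w.re → 0 < (w + a).re := fun w hw => by
    simpa only [add_re] using add_pos hw ha
  have ha0 : a ≠ 0 := fun h => by simp [h] at ha
  have hadmissible : ∀ w : ℂ, 0 < w.re →
      (∀ n : ℕ, 0 < (w + n • a).re) ∧ (∃ M : ℝ, ∀ n : ℕ, |(w + n • a).im| ≤ M * (w + n • a).re) ∧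
        Tendsto (fun n : ℕ => ‖w + n • a‖) atTop atTop := fun w hw =>
    ⟨add_nsmul_mem_of_add_mem (S := {w : ℂ | 0 < w.re}) hS hw,
      exists_abs_im_le_mul_re_add_nsmul hw ha, tendsto_norm_add_nsmul_atTop ha0 w⟩
  have hconst : ∀ w : ℂ, 0 < w.re → ∀ n : ℕ, g (w + n • a) = g w := fun w hw =>
    apply_add_nsmul_eq_of_periodicOn (S := {w : ℂ | 0 < w.re}) hS heq hw
  rcases hlim with ⟨L, hL⟩ | hinf
  · have hL' : ∀ w : ℂ, 0 < w.re → g w = L := fun w hw =>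
      tendsto_nhds_unique tendsto_const_nhds <|
        (hL _ (hadmissible w hw).1 (hadmissible w hw).2.1 (hadmissible w hw).2.2).congr
          (hconst w hw)
    intro w w' hw hw'
    rw [hL' w hw, hL' w' hw']
  · obtain ⟨hre, hsector, hnorm⟩ := hadmissible 1 one_pos
    have hdiverges := (hinf _ hre hsector hnorm).congr fun n => by rw [hconst 1 one_pos n]
    exact absurd hdiverges (not_tendsto_atTop_of_tendsto_nhds tendsto_const_nhds)

theorem periodic_with_angular_limit_constant (g : ℂ → ℂ)
    (hdiff : DifferentiableOn ℂ g {w : ℂ | 0 < w.re})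
    (hmaps : ∀ w : ℂ, 0 < w.re → 0 < (g w).re)
    (a : ℂ) (ha : 0 < a.re)
    (heq : ∀ w : ℂ, 0 < w.re → g (w + a) = g w)
    (hlim :
      (∃ L : ℂ, ∀ u : ℕ → ℂ, (∀ n, 0 < (u n).re) →
          (∃ M : ℝ, ∀ n, |(u n).im| ≤ M * (u n).re) →
          Tendsto (fun n => ‖u n‖) atTop atTop →
          Tendsto (fun n => g (u n)) atTop (nhds L)) ∨
        (∀ u : ℕ → ℂ, (∀ n, 0 < (u n).re) →
          (∃ M : ℝ, ∀ n, |(u n).im| ≤ M * (u n).re) →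
          Tendsto (fun n => ‖u n‖) atTop atTop →
          Tendsto (fun n => ‖g (u n)‖) atTop atTop)) :
    ∀ w w' : ℂ, 0 < w.re → 0 < w'.re → g w = g w' :=
  periodic_with_angular_limit_constant_general g a ha heq hlim
end

section
/- Define f(z) = (1/2)·exp(-π²/log 2)·exp((2πi/log 2)·Log(1/(1-z))) for z ∈ 𝔻, where Log is the principal branch of the logarithm, and φ(z) = (1+z)/2. Then f maps 𝔻 into 𝔻 and f ∘ φ = f on 𝔻. -/
open Complex Real

/-!
Put `w = 1 / (1 - z)`, which lies in the right half-plane, so `|arg w| < π / 2`. With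
`c = 2π / log 2`, the factor `exp (c i Log w)` has modulus `exp (-c arg w) < exp (π² / log 2)`,
which the constant `exp (-π² / log 2)` cancels, leaving `|f z| < 1 / 2`. The map `(1 + z) / 2`
turns `w` into `2 w`, so `Log w` changes by `log 2` and the exponent by `2π i`.
-/

namespace Complex

lemma re_inv_pos {w : ℂ} (hw : 0 < w.re) : 0 < w⁻¹.re := by
  rw [inv_re]
  exact div_pos hw (normSq_pos.mpr (ne_zero_of_re_pos hw))

lemma re_one_sub_pos_of_norm_lt_one {z : ℂ} (hz : ‖z‖ < 1) : 0 < (1 - z).re := by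
  simpa only [sub_re, one_re, sub_pos] using (re_le_norm z).trans_lt hz

lemma norm_exp_ofReal_mul_I_mul_log (c : ℝ) (w : ℂ) :
    ‖exp (c * I * log w)‖ = Real.exp (-(c * w.arg)) := by
  rw [norm_exp]
  simp [log_im]

lemma norm_exp_ofReal_mul_I_mul_log_lt {c : ℝ} (hc : 0 < c) {w : ℂ} (hw : 0 < w.re) :
    ‖exp (c * I * log w)‖ < Real.exp (c * (π / 2)) := by
  rw [norm_exp_ofReal_mul_I_mul_log, Real.exp_lt_exp, ← mul_neg]
  have harg := abs_lt.mp (abs_arg_lt_pi_div_two_iff.mpr (Or.inl hw))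
  exact mul_lt_mul_of_pos_left (by linarith [harg.1]) hc

lemma exp_two_pi_I_div_log_mul_log_ofReal_mul {a : ℝ} (ha : 0 < a) {w : ℂ} (hw : w ≠ 0) :
    exp (2 * π * I / Real.log a * log (a * w)) = exp (2 * π * I / Real.log a * log w) := by
  have hperiod : exp (2 * π * I / Real.log a * Real.log a) = 1 := by
    rcases eq_or_ne (Real.log a : ℂ) 0 with h | h
    · simp [h]
    · rw [div_mul_cancel₀ _ h, exp_two_pi_mul_I]
  rw [log_ofReal_mul ha hw, mul_add, exp_add, hperiod, one_mul]

end Complex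

theorem example_invariant_under_hyperbolic :
    let f : ℂ → ℂ := fun z =>
      (1 / 2) * Complex.exp (-(Real.pi ^ 2 : ℂ) / (Real.log 2 : ℂ)) *
        Complex.exp ((2 * (Real.pi : ℂ) * Complex.I / (Real.log 2 : ℂ)) *
          Complex.log (1 / (1 - z)))
    ∀ z : ℂ, ‖z‖ < 1 →
      ‖f z‖ < 1 ∧ f ((1 + z) / 2) = f z := by
  intro f z hz
  have hw : 0 < (1 / (1 - z)).re := by
    simpa only [one_div] using re_inv_pos (re_one_sub_pos_of_norm_lt_one hz)
  constructor
  · set c := 2 * π / Real.log 2 with hc_def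
    have hc : 0 < c := div_pos (by positivity) (Real.log_pos one_lt_two)
    have hcoef : 2 * (π : ℂ) * I / (Real.log 2 : ℂ) = c * I := by
      push_cast [hc_def]; ring
    have hconst : -(π ^ 2 : ℂ) / (Real.log 2 : ℂ) = ((-(c * (π / 2)) : ℝ) : ℂ) := by
      push_cast [hc_def]; ring
    have hbound := norm_exp_ofReal_mul_I_mul_log_lt hc hw
    simp only [f, norm_mul, hcoef, hconst, norm_exp_ofReal]
    calc _ < 1 / 2 * Real.exp (-(c * (π / 2))) * Real.exp (c * (π / 2)) := by
          rw [show ‖(1 / 2 : ℂ)‖ = 1 / 2 by norm_num]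
          gcongr
      _ = 1 / 2 := by rw [mul_assoc, ← Real.exp_add, neg_add_cancel, Real.exp_zero, mul_one]
      _ < 1 := by norm_num
  · have hdouble : 1 / (1 - (1 + z) / 2) = ((2 : ℝ) : ℂ) * (1 / (1 - z)) := by
      rw [show (1 : ℂ) - (1 + z) / 2 = (1 - z) / 2 by ring, one_div_div]
      push_cast
      ring
    simp only [f, hdouble, exp_two_pi_I_div_log_mul_log_ofReal_mul two_pos (ne_zero_of_re_pos hw)]
end

section
/- Let f : 𝔻 → 𝔻 be holomorphic and non-constant, d ∈ ℂ with d ≠ 0 and |d| ≠ 1, and suppose f(z/d) = f(z)/d for all z ∈ 𝔻 where both sides are defined (taking |d| > 1 so z/d ∈ 𝔻). Then there is a nonzero constant a₁ with f(z) = a₁z for all z ∈ 𝔻; in particular f'(0) ≠ 0. -/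
/-!
Iterating the functional equation gives `f (z / dⁿ) = f z / dⁿ`, and `f 0 = 0`. Hence the
difference quotient of `f` at `0` taken at the points `z / dⁿ → 0` is the constant `f z / z`,
so it equals `f'(0)`, i.e. `f z = f'(0) z`.
-/

open Filter Topology

theorem eq_zero_of_div_eq_self {K : Type*} [DivisionRing K] {a d : K} (hd : d ≠ 1)
    (h : a / d = a) : a = 0 := by
  rcases eq_or_ne d 0 with rfl | hd0
  · simpa [eq_comm] using h
  rw [div_eq_iff hd0, eq_comm, mul_right_eq_self₀] at h
  exact h.resolve_left hd

section Homogeneity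

variable {𝕜 : Type*} [NontriviallyNormedField 𝕜] {f : 𝕜 → 𝕜} {d : 𝕜}

theorem apply_div_pow_of_apply_div {s : Set 𝕜} (hs : Set.MapsTo (· / d) s s)
    (heq : ∀ z ∈ s, f (z / d) = f z / d) (n : ℕ) {z : 𝕜} (hz : z ∈ s) :
    f (z / d ^ n) = f z / d ^ n := by
  induction n generalizing z with
  | zero => simp
  | succ n ih => rw [pow_succ', ← div_div, ← div_div, ih (hs hz), heq z hz]

theorem tendsto_div_pow_nhdsNE_zero (hd : 1 < ‖d‖) {z : 𝕜} (hz : z ≠ 0) :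
    Tendsto (fun n : ℕ => z / d ^ n) atTop (𝓝[≠] 0) := by
  have hd0 : d ≠ 0 := norm_pos_iff.mp (one_pos.trans hd)
  refine tendsto_nhdsWithin_of_tendsto_nhds_of_eventually_within _ ?_
    (Eventually.of_forall fun n => div_ne_zero hz (pow_ne_zero n hd0))
  have hpow : Tendsto (fun n : ℕ => d⁻¹ ^ n) atTop (𝓝 0) :=
    tendsto_pow_atTop_nhds_zero_of_norm_lt_one (by rw [norm_inv]; exact inv_lt_one_of_one_lt₀ hd)
  simpa [div_eq_mul_inv, inv_pow] using hpow.const_mul z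

theorem apply_eq_deriv_mul_of_apply_div_pow (hf : DifferentiableAt 𝕜 f 0) (hf0 : f 0 = 0)
    (hd : 1 < ‖d‖) {z : 𝕜} (h : ∀ n : ℕ, f (z / d ^ n) = f z / d ^ n) :
    f z = deriv f 0 * z := by
  rcases eq_or_ne z 0 with rfl | hz
  · simp [hf0]
  have hd0 : d ≠ 0 := norm_pos_iff.mp (one_pos.trans hd)
  have hslope : ∀ n : ℕ, slope f 0 (z / d ^ n) = f z / z := fun n => by
    rw [slope_def_field, h, hf0, sub_zero, sub_zero,
      div_div_div_cancel_right₀ (pow_ne_zero n hd0)]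
  have hlim : Tendsto (fun _ : ℕ => f z / z) atTop (𝓝 (deriv f 0)) :=
    ((hasDerivAt_iff_tendsto_slope.mp hf.hasDerivAt).comp
      (tendsto_div_pow_nhdsNE_zero hd hz)).congr hslope
  rw [← tendsto_nhds_unique tendsto_const_nhds hlim, div_mul_cancel₀ _ hz]

end Homogeneity

theorem commuting_with_linear_map_is_linear_general (f : ℂ → ℂ)
    (hf : DifferentiableOn ℂ f {z : ℂ | ‖z‖ < 1})
    (hnc : ¬ ∃ w : ℂ, ∀ z : ℂ, ‖z‖ < 1 → f z = w)
    (d : ℂ) (hd1 : 1 < ‖d‖)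
    (heq : ∀ z : ℂ, ‖z‖ < 1 → f (z / d) = f z / d) :
    ∃ a₁ : ℂ, a₁ ≠ 0 ∧ (∀ z : ℂ, ‖z‖ < 1 → f z = a₁ * z) ∧ deriv f 0 ≠ 0 := by
  have hs : Set.MapsTo (· / d) {z : ℂ | ‖z‖ < 1} {z : ℂ | ‖z‖ < 1} :=
    fun z (hz : ‖z‖ < 1) => show ‖z / d‖ < 1 by
      rw [norm_div]; exact (div_le_self (norm_nonneg z) hd1.le).trans_lt hz
  have hdiff : DifferentiableAt ℂ f 0 :=
    hf.differentiableAt ((isOpen_lt continuous_norm continuous_const).mem_nhds (by simp))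
  have hzero : f 0 = 0 :=
    eq_zero_of_div_eq_self (d := d) (by rintro rfl; simp at hd1)
      (by simpa using (heq 0 (by simp)).symm)
  have hlin : ∀ z : ℂ, ‖z‖ < 1 → f z = deriv f 0 * z := fun z hz =>
    apply_eq_deriv_mul_of_apply_div_pow hdiff hzero hd1 fun n =>
      apply_div_pow_of_apply_div hs heq n hz
  have ha : deriv f 0 ≠ 0 := fun h => hnc ⟨0, fun z hz => by rw [hlin z hz, h, zero_mul]⟩
  exact ⟨deriv f 0, ha, hlin, ha⟩

theorem commuting_with_linear_map_is_linear (f : ℂ → ℂ)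
    (hf : DifferentiableOn ℂ f {z : ℂ | ‖z‖ < 1})
    (hmaps : ∀ z : ℂ, ‖z‖ < 1 → ‖f z‖ < 1)
    (hnc : ¬ ∃ w : ℂ, ∀ z : ℂ, ‖z‖ < 1 → f z = w)
    (d : ℂ) (hd0 : d ≠ 0) (hd1 : 1 < ‖d‖)
    (heq : ∀ z : ℂ, ‖z‖ < 1 → f (z / d) = f z / d) :
    ∃ a₁ : ℂ, a₁ ≠ 0 ∧ (∀ z : ℂ, ‖z‖ < 1 → f z = a₁ * z) ∧ deriv f 0 ≠ 0 :=
  commuting_with_linear_map_is_linear_general f hf hnc d hd1 heq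
end
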